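/- Let f : Ω → ℝᵐ, Ω ⊆ ℝⁿ open, be continuous, and let x ∈ Ω. Then the SC derivative of f satisfies 𝒮f(x) ⊇ {rge(I_n, A) | A ∈ ∇̄f(x)} and the adjoint SC derivative satisfies 𝒮*f(x) ⊇ {rge(I_m, Aᵀ) | A ∈ ∇̄f(x)}. If f is Lipschitz near x, these inclusions hold with equality and f has the SCD property at all points sufficiently close to x. -/

import Mathlib

open Filter Topology Set Module

/-- Join a pair into a Euclidean space on a sum index type. -/
noncomputable def emb {α β : Type*} [Fintype α] [Fintype β]
    (x : EuclideanSpace ℝ α) (y : EuclideanSpace ℝ β) : EuclideanSpace ℝ (α ⊕ β) :=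
  WithLp.toLp 2 (fun s => Sum.elim (fun i => x i) (fun j => y j) s)

/-- Orthogonal projection onto a subspace as an endomap. -/
noncomputable def projCLM {ι : Type*} [Fintype ι] (L : Submodule ℝ (EuclideanSpace ℝ ι)) :
    EuclideanSpace ℝ ι →L[ℝ] EuclideanSpace ℝ ι :=
  L.subtypeL.comp (L.orthogonalProjectionOnto)

/-- The projection metric `d(L₁,L₂) = ‖P₁ - P₂‖` on subspaces. -/
noncomputable def dZ {ι : Type*} [Fintype ι] (L₁ L₂ : Submodule ℝ (EuclideanSpace ℝ ι)) : ℝ :=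
  ‖projCLM L₁ - projCLM L₂‖

/-- The SC derivative of a set `S` (a graph) at `w ∈ S`, for dimension `d`: all `d`-dimensional
subspaces arising as limits (in the projection metric) of tangent spaces at points of `S` where
`S` is graphically smooth of dimension `d`. -/
noncomputable def SCderivSet {ι : Type*} [Fintype ι] (S : Set (EuclideanSpace ℝ ι))
    (w : EuclideanSpace ℝ ι) (d : ℕ) : Set (Submodule ℝ (EuclideanSpace ℝ ι)) :=
  {L | finrank ℝ L = d ∧
    ∃ (wk : ℕ → EuclideanSpace ℝ ι) (Lk : ℕ → Submodule ℝ (EuclideanSpace ℝ ι)),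
      (∀ k, wk k ∈ S ∧ finrank ℝ (Lk k) = d ∧
        ((Lk k : Set (EuclideanSpace ℝ ι)) = tangentConeAt ℝ S (wk k))) ∧
      Tendsto wk atTop (𝓝 w) ∧ Tendsto (fun k => dZ (Lk k) L) atTop (𝓝 0)}

/-- The linear map `(a, b) ↦ (b, -a)`, used to define the adjoint subspace. -/
noncomputable def swapNeg (α β : Type*) [Fintype α] [Fintype β] :
    EuclideanSpace ℝ (β ⊕ α) →ₗ[ℝ] EuclideanSpace ℝ (α ⊕ β) where
  toFun w := WithLp.toLp 2 (fun s => Sum.elim (fun i : α => w (Sum.inr i)) (fun j : β => -(w (Sum.inl j))) s)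
  map_add' u v := by
    ext s
    cases s with
    | inl i => show (u + v) (Sum.inr i) = u (Sum.inr i) + v (Sum.inr i); rfl
    | inr j =>
        show -((u + v) (Sum.inl j)) = -(u (Sum.inl j)) + -(v (Sum.inl j))
        show -((u (Sum.inl j)) + (v (Sum.inl j))) = _
        ring
  map_smul' c u := by
    ext s
    cases s with
    | inl i => rfl
    | inr j =>
        show -((c • u) (Sum.inl j)) = c * -(u (Sum.inl j))
        show -(c * (u (Sum.inl j))) = c * -(u (Sum.inl j))
        ring

/-- The adjoint subspace `L* = {(-v*, u*) | (u*, v*) ∈ L^⊥}`. -/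
noncomputable def adjSub {α β : Type*} [Fintype α] [Fintype β]
    (L : Submodule ℝ (EuclideanSpace ℝ (α ⊕ β))) : Submodule ℝ (EuclideanSpace ℝ (β ⊕ α)) :=
  Lᗮ.comap (swapNeg α β)

/-- `rge(I, A) = {(p, Ap)}` as a subspace of the sum Euclidean space. -/
noncomputable def graphSub {α β : Type*} [Fintype α] [Fintype β]
    (A : EuclideanSpace ℝ α →L[ℝ] EuclideanSpace ℝ β) :
    Submodule ℝ (EuclideanSpace ℝ (α ⊕ β)) :=
  LinearMap.range
    ({ toFun := fun p => emb p (A p)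
       map_add' := by
         intro p q
         ext s
         cases s with
         | inl i => show (p + q) i = p i + q i; rfl
         | inr j => show (A (p + q)) j = (A p) j + (A q) j; rw [map_add]; rfl
       map_smul' := by
         intro c p
         ext s
         cases s with
         | inl i => show (c • p) i = c * p i; rfl
         | inr j => show (A (c • p)) j = c * (A p) j; rw [map_smul]; rfl } :
      EuclideanSpace ℝ α →ₗ[ℝ] EuclideanSpace ℝ (α ⊕ β))

/-- The B-Jacobian of `f` at `x`, relative to the open set `Ω`. -/
noncomputable def BJac {n m : ℕ} (Ω : Set (EuclideanSpace ℝ (Fin n)))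
    (f : EuclideanSpace ℝ (Fin n) → EuclideanSpace ℝ (Fin m))
    (x : EuclideanSpace ℝ (Fin n)) : Set (EuclideanSpace ℝ (Fin n) →L[ℝ] EuclideanSpace ℝ (Fin m)) :=
  {A | ∃ xk : ℕ → EuclideanSpace ℝ (Fin n),
      (∀ k, xk k ∈ Ω ∧ DifferentiableAt ℝ f (xk k)) ∧
      Tendsto xk atTop (𝓝 x) ∧ Tendsto (fun k => fderiv ℝ f (xk k)) atTop (𝓝 A)}

/-- The graph of `f` over `Ω`, inside the sum Euclidean space. -/
noncomputable def gphFun {n m : ℕ} (Ω : Set (EuclideanSpace ℝ (Fin n)))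
    (f : EuclideanSpace ℝ (Fin n) → EuclideanSpace ℝ (Fin m)) :
    Set (EuclideanSpace ℝ (Fin n ⊕ Fin m)) :=
  {w | ∃ x ∈ Ω, w = emb x (f x)}

/-- SC derivative of a single-valued map `f` at `x`. -/
noncomputable def SCderivFun {n m : ℕ} (Ω : Set (EuclideanSpace ℝ (Fin n)))
    (f : EuclideanSpace ℝ (Fin n) → EuclideanSpace ℝ (Fin m)) (x : EuclideanSpace ℝ (Fin n)) :
    Set (Submodule ℝ (EuclideanSpace ℝ (Fin n ⊕ Fin m))) :=
  SCderivSet (gphFun Ω f) (emb x (f x)) n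

/-- Adjoint SC derivative of `f` at `x`. -/
noncomputable def SCderivStarFun {n m : ℕ} (Ω : Set (EuclideanSpace ℝ (Fin n)))
    (f : EuclideanSpace ℝ (Fin n) → EuclideanSpace ℝ (Fin m)) (x : EuclideanSpace ℝ (Fin n)) :
    Set (Submodule ℝ (EuclideanSpace ℝ (Fin m ⊕ Fin n))) :=
  {M | ∃ L ∈ SCderivFun Ω f x, M = adjSub L}

/-!
At a point where `f` is differentiable, the tangent cone to its graph is the graph of the
derivative, and the orthogonal projection onto `rge(I, B)` depends continuously on `B`; hence every
element of the B-Jacobian yields an element of `𝒮f(x)`, and `rge(I, A)* = rge(I, Aᵀ)`.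

Conversely, if `f` is `K`-Lipschitz near `x`, tangent vectors `(u, v)` to the graph satisfy
`‖v‖ ≤ K‖u‖`, so an `n`-dimensional tangent space is some `rge(I, B)`, and a compactness argument
on normalised secants shows that `f` is differentiable there with derivative `B`. Along a sequence
defining an element of `𝒮f(x)` these derivatives are bounded by `K`, so a subsequence converges to
an element of the B-Jacobian. Rademacher's theorem makes the B-Jacobian, hence `𝒮f(x')`, nonempty
for `x'` near `x`.
-/

open RealInnerProductSpace

section SumSpace

variable {α β : Type*} [Fintype α] [Fintype β]

noncomputable def fstL : EuclideanSpace ℝ (α ⊕ β) →L[ℝ] EuclideanSpace ℝ α :=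
  (ContinuousLinearMap.fst ℝ _ _).comp
    (EuclideanSpace.sumEquivProd (𝕜 := ℝ) (ι := α) (κ := β)).toContinuousLinearMap

noncomputable def sndL : EuclideanSpace ℝ (α ⊕ β) →L[ℝ] EuclideanSpace ℝ β :=
  (ContinuousLinearMap.snd ℝ _ _).comp
    (EuclideanSpace.sumEquivProd (𝕜 := ℝ) (ι := α) (κ := β)).toContinuousLinearMap

lemma emb_eq_sumEquivProd_symm (a : EuclideanSpace ℝ α) (b : EuclideanSpace ℝ β) :
    emb a b = EuclideanSpace.sumEquivProd.symm (a, b) := rfl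

@[simp] lemma fstL_emb (a : EuclideanSpace ℝ α) (b : EuclideanSpace ℝ β) : fstL (emb a b) = a := rfl

@[simp] lemma sndL_emb (a : EuclideanSpace ℝ α) (b : EuclideanSpace ℝ β) : sndL (emb a b) = b := rfl

@[simp] lemma emb_fstL_sndL (w : EuclideanSpace ℝ (α ⊕ β)) : emb (fstL w) (sndL w) = w :=
  EuclideanSpace.sumEquivProd.symm_apply_apply w

@[simp] lemma emb_zero : emb (0 : EuclideanSpace ℝ α) (0 : EuclideanSpace ℝ β) = 0 :=
  map_zero (EuclideanSpace.sumEquivProd (𝕜 := ℝ) (ι := α) (κ := β)).symm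

lemma emb_add (a c : EuclideanSpace ℝ α) (b d : EuclideanSpace ℝ β) :
    emb a b + emb c d = emb (a + c) (b + d) := by
  simp only [emb_eq_sumEquivProd_symm, ← map_add, Prod.mk_add_mk]

lemma emb_sub (a c : EuclideanSpace ℝ α) (b d : EuclideanSpace ℝ β) :
    emb a b - emb c d = emb (a - c) (b - d) := by
  simp only [emb_eq_sumEquivProd_symm, ← map_sub, Prod.mk_sub_mk]

lemma smul_emb (t : ℝ) (a : EuclideanSpace ℝ α) (b : EuclideanSpace ℝ β) :
    t • emb a b = emb (t • a) (t • b) := by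
  simp only [emb_eq_sumEquivProd_symm, ← map_smul, Prod.smul_mk]

lemma Filter.Tendsto.emb {γ : Type*} {l : Filter γ} {a : γ → EuclideanSpace ℝ α}
    {b : γ → EuclideanSpace ℝ β} {a₀ : EuclideanSpace ℝ α} {b₀ : EuclideanSpace ℝ β}
    (ha : Tendsto a l (𝓝 a₀)) (hb : Tendsto b l (𝓝 b₀)) :
    Tendsto (fun i => emb (a i) (b i)) l (𝓝 (emb a₀ b₀)) :=
  (EuclideanSpace.sumEquivProd.symm.continuous.tendsto _).comp (ha.prodMk_nhds hb)

lemma inner_emb (a c : EuclideanSpace ℝ α) (b d : EuclideanSpace ℝ β) :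
    ⟪emb a b, emb c d⟫ = ⟪a, c⟫ + ⟪b, d⟫ := by
  simp only [PiLp.inner_apply, Fintype.sum_sum_type]
  rfl

lemma norm_emb_le (a : EuclideanSpace ℝ α) (b : EuclideanSpace ℝ β) :
    ‖emb a b‖ ≤ ‖a‖ + ‖b‖ := by
  have h : ‖emb a b‖ ^ 2 ≤ (‖a‖ + ‖b‖) ^ 2 := by
    rw [← real_inner_self_eq_norm_sq, inner_emb, real_inner_self_eq_norm_sq,
      real_inner_self_eq_norm_sq]
    nlinarith [norm_nonneg a, norm_nonneg b]
  exact pow_le_pow_iff_left₀ (norm_nonneg _) (by positivity) two_ne_zero |>.mp h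

noncomputable def graphMap (B : EuclideanSpace ℝ α →L[ℝ] EuclideanSpace ℝ β) :
    EuclideanSpace ℝ α →L[ℝ] EuclideanSpace ℝ (α ⊕ β) :=
  (EuclideanSpace.sumEquivProd (𝕜 := ℝ) (ι := α) (κ := β)).symm.toContinuousLinearMap.comp
    ((ContinuousLinearMap.id ℝ _).prod B)

@[simp] lemma graphMap_apply (B : EuclideanSpace ℝ α →L[ℝ] EuclideanSpace ℝ β)
    (p : EuclideanSpace ℝ α) : graphMap B p = emb p (B p) := rfl

lemma graphSub_eq_range (B : EuclideanSpace ℝ α →L[ℝ] EuclideanSpace ℝ β) :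
    graphSub B = LinearMap.range (graphMap B : EuclideanSpace ℝ α →ₗ[ℝ] EuclideanSpace ℝ (α ⊕ β)) :=
  rfl

lemma mem_graphSub {B : EuclideanSpace ℝ α →L[ℝ] EuclideanSpace ℝ β}
    {w : EuclideanSpace ℝ (α ⊕ β)} : w ∈ graphSub B ↔ sndL w = B (fstL w) := by
  rw [graphSub_eq_range, LinearMap.mem_range]
  constructor
  · rintro ⟨p, rfl⟩
    rfl
  · intro h
    exact ⟨fstL w, by rw [ContinuousLinearMap.coe_coe, graphMap_apply, ← h, emb_fstL_sndL]⟩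

lemma graphMap_injective (B : EuclideanSpace ℝ α →L[ℝ] EuclideanSpace ℝ β) :
    Function.Injective (graphMap B) := fun p q h => by
  simpa using congrArg fstL h

lemma finrank_graphSub (B : EuclideanSpace ℝ α →L[ℝ] EuclideanSpace ℝ β) :
    finrank ℝ (graphSub B) = Fintype.card α := by
  rw [graphSub_eq_range, LinearMap.finrank_range_of_inj (graphMap_injective B),
    finrank_euclideanSpace]

lemma continuous_graphMap :
    Continuous (graphMap : (EuclideanSpace ℝ α →L[ℝ] EuclideanSpace ℝ β) → _) := by
  have hprod : Continuous fun B : EuclideanSpace ℝ α →L[ℝ] EuclideanSpace ℝ β =>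
      (ContinuousLinearMap.id ℝ _).prod B :=
    (ContinuousLinearMap.prodₗᵢ ℝ).continuous.comp (continuous_const.prodMk continuous_id)
  exact (ContinuousLinearMap.compL ℝ _ _ _ _).continuous.comp hprod

end SumSpace

section RangeProjection

variable {E F : Type*} [NormedAddCommGroup E] [InnerProductSpace ℝ E] [FiniteDimensional ℝ E]
  [NormedAddCommGroup F] [InnerProductSpace ℝ F] [FiniteDimensional ℝ F]

open ContinuousLinearMap

lemma isUnit_adjoint_comp_self {G : E →L[ℝ] F} (hG : Function.Injective G) :
    IsUnit (adjoint G ∘L G) := by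
  have hinj : Function.Injective (adjoint G ∘L G : E →ₗ[ℝ] E) := by
    refine (injective_iff_map_eq_zero _).mpr fun p hp => hG ?_
    rw [map_zero, ← inner_self_eq_zero (𝕜 := ℝ), ← adjoint_inner_right]
    simp only [coe_coe, comp_apply] at hp
    rw [hp, inner_zero_right]
  exact isUnit_iff_bijective.mpr ⟨hinj, LinearMap.injective_iff_surjective.mp hinj⟩

lemma starProjection_range_eq {G : E →L[ℝ] F} (hG : Function.Injective G) :
    (LinearMap.range (G : E →ₗ[ℝ] F)).starProjection =
      G ∘L Ring.inverse (adjoint G ∘L G) ∘L adjoint G := by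
  ext w
  refine Submodule.eq_starProjection_of_mem_of_inner_eq_zero ⟨_, rfl⟩ ?_
  rintro _ ⟨p, rfl⟩
  have hnormal : adjoint G (G (Ring.inverse (adjoint G ∘L G) (adjoint G w))) = adjoint G w := by
    simpa [mul_def] using
      DFunLike.congr_fun (Ring.mul_inverse_cancel _ (isUnit_adjoint_comp_self hG)) (adjoint G w)
  rw [coe_coe, ← adjoint_inner_left, map_sub, comp_apply, comp_apply, hnormal, sub_self,
    inner_zero_left]

lemma continuous_starProjection_range {X : Type*} [TopologicalSpace X] {G : X → E →L[ℝ] F}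
    (hG : Continuous G) (hinj : ∀ x, Function.Injective (G x)) :
    Continuous fun x => (LinearMap.range (G x : E →ₗ[ℝ] F)).starProjection := by
  simp_rw [starProjection_range_eq (hinj _)]
  have hGG : Continuous fun x => adjoint (G x) ∘L G x :=
    (adjoint.continuous.comp hG).clm_comp hG
  have hinv : Continuous fun x => Ring.inverse (adjoint (G x) ∘L G x) := by
    refine continuous_iff_continuousAt.mpr fun x => ?_
    have hu := isUnit_adjoint_comp_self (hinj x)
    have hcont : ContinuousAt Ring.inverse (adjoint (G x) ∘L G x) := by
      simpa using NormedRing.inverse_continuousAt hu.unit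
    exact hcont.comp (x := x) hGG.continuousAt
  exact hG.clm_comp (hinv.clm_comp (adjoint.continuous.comp hG))

end RangeProjection

section ProjectionMetric

variable {ι γ : Type*} [Fintype ι] {l : Filter γ} {Lk : γ → Submodule ℝ (EuclideanSpace ℝ ι)}
  {L L' : Submodule ℝ (EuclideanSpace ℝ ι)}

lemma projCLM_eq_starProjection (L : Submodule ℝ (EuclideanSpace ℝ ι)) :
    projCLM L = L.starProjection := rfl

lemma tendsto_dZ_iff :
    Tendsto (fun k => dZ (Lk k) L) l (𝓝 0) ↔ Tendsto (fun k => projCLM (Lk k)) l (𝓝 (projCLM L)) :=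
  tendsto_iff_norm_sub_tendsto_zero.symm

lemma eq_of_tendsto_dZ [l.NeBot] (h : Tendsto (fun k => dZ (Lk k) L) l (𝓝 0))
    (h' : Tendsto (fun k => dZ (Lk k) L') l (𝓝 0)) : L = L' :=
  Submodule.starProjection_inj.mp (tendsto_nhds_unique (tendsto_dZ_iff.mp h) (tendsto_dZ_iff.mp h'))

lemma tendsto_dZ_graphSub {α β : Type*} [Fintype α] [Fintype β]
    {Ak : γ → EuclideanSpace ℝ α →L[ℝ] EuclideanSpace ℝ β}
    {A : EuclideanSpace ℝ α →L[ℝ] EuclideanSpace ℝ β} (h : Tendsto Ak l (𝓝 A)) :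
    Tendsto (fun k => dZ (graphSub (Ak k)) (graphSub A)) l (𝓝 0) := by
  simp only [tendsto_dZ_iff, projCLM_eq_starProjection, graphSub_eq_range]
  exact ((continuous_starProjection_range continuous_graphMap graphMap_injective).tendsto A).comp h

end ProjectionMetric

section Adjoint

variable {α β : Type*} [Fintype α] [Fintype β]

lemma swapNeg_apply (w : EuclideanSpace ℝ (β ⊕ α)) : swapNeg α β w = emb (sndL w) (-fstL w) :=
  rfl

lemma adjSub_graphSub (A : EuclideanSpace ℝ α →L[ℝ] EuclideanSpace ℝ β) :
    adjSub (graphSub A) = graphSub (ContinuousLinearMap.adjoint A) := by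
  ext w
  have key : ∀ p, ⟪graphMap A p, swapNeg α β w⟫ =
      ⟪p, sndL w - ContinuousLinearMap.adjoint A (fstL w)⟫ := by
    intro p
    rw [graphMap_apply, swapNeg_apply, inner_emb, inner_neg_right, inner_sub_right,
      ContinuousLinearMap.adjoint_inner_right, sub_eq_add_neg]
  rw [adjSub, Submodule.mem_comap, mem_graphSub, ← sub_eq_zero, graphSub_eq_range,
    Submodule.mem_orthogonal]
  simp only [LinearMap.mem_range, forall_exists_index, forall_apply_eq_imp_iff,
    ContinuousLinearMap.coe_coe, key]
  exact ⟨fun h => inner_self_eq_zero.mp (h _), fun h p => by rw [h, inner_zero_right]⟩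

lemma setOf_graphSub_adjoint_eq_image (S : Set (EuclideanSpace ℝ α →L[ℝ] EuclideanSpace ℝ β)) :
    {M | ∃ A ∈ S, M = graphSub (ContinuousLinearMap.adjoint A)} =
      adjSub '' {L | ∃ A ∈ S, L = graphSub A} := by
  ext M
  simp [adjSub_graphSub, eq_comm]

end Adjoint

section TangentCone

variable {R E : Type*} [AddCommGroup E] [SMul R E] [TopologicalSpace E] {s : Set E} {x : E}

lemma tangentConeAt_subset_of_eventually_sub_mem [ContinuousAdd E] {C : Set E} (hC : IsClosed C)
    (hcone : ∀ (c : R), ∀ v ∈ C, c • v ∈ C) (hs : ∀ᶠ y in 𝓝[s] x, y - x ∈ C) :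
    tangentConeAt R s x ⊆ C := by
  intro z hz
  obtain ⟨ι, l, hl, c, d, hd₀, hds, hcd⟩ := exists_fun_of_mem_tangentConeAt hz
  have hxd : Tendsto (fun n => x + d n) l (𝓝[s] x) :=
    tendsto_nhdsWithin_iff.mpr ⟨by simpa using tendsto_const_nhds.add hd₀, hds⟩
  refine hC.mem_of_tendsto hcd ((hxd.eventually hs).mono fun n hn => hcone _ _ ?_)
  simpa using hn

lemma mem_tangentConeAt_of_mapClusterPt {ι : Type*} {l : Filter ι} {c : ι → R} {d : ι → E} {z : E}
    (hd : Tendsto d l (𝓝 0)) (hs : ∀ᶠ i in l, x + d i ∈ s)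
    (hz : MapClusterPt z l (fun i => c i • d i)) : z ∈ tangentConeAt R s x := by
  have : NeBot (l ⊓ comap (fun i => c i • d i) (𝓝 z)) := by
    rw [neBot_inf_comap_iff_map, inf_comm]
    exact hz
  exact mem_tangentConeAt_of_seq _ c d (hd.mono_left inf_le_left) (hs.filter_mono inf_le_left)
    (tendsto_comap.mono_left inf_le_right)

end TangentCone

section GraphTangentCone

variable {α β : Type*} [Fintype α] [Fintype β] {f : EuclideanSpace ℝ α → EuclideanSpace ℝ β}
  {s V : Set (EuclideanSpace ℝ α)} {x : EuclideanSpace ℝ α}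
  {A : EuclideanSpace ℝ α →L[ℝ] EuclideanSpace ℝ β}

lemma hasFDerivAt_graph (hf : HasFDerivAt f A x) :
    HasFDerivAt (fun y => emb y (f y)) (graphMap A) x :=
  (EuclideanSpace.sumEquivProd (𝕜 := ℝ) (ι := α) (κ := β)).symm.hasFDerivAt.comp x
    ((hasFDerivAt_id x).prodMk hf)

lemma graphSub_subset_tangentConeAt_graph (hs : s ∈ 𝓝 x) (hf : HasFDerivAt f A x) :
    (graphSub A : Set _) ⊆ tangentConeAt ℝ ((fun y => emb y (f y)) '' s) (emb x (f x)) := by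
  rintro _ ⟨p, rfl⟩
  exact (hasFDerivAt_graph hf).hasFDerivWithinAt.mapsTo_tangent_cone
    (by simp [tangentConeAt_of_mem_nhds hs])

lemma tangentConeAt_graph_subset_graphSub (hf : HasFDerivAt f A x) :
    tangentConeAt ℝ ((fun y => emb y (f y)) '' s) (emb x (f x)) ⊆ graphSub A := by
  -- `w ↦ sndL w - f (fstL w)` vanishes on the graph, so its derivative kills every tangent vector
  set h : EuclideanSpace ℝ (α ⊕ β) → EuclideanSpace ℝ β := fun w => sndL w - f (fstL w)
  have hh : HasFDerivAt h (sndL - A ∘L fstL) (emb x (f x)) :=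
    sndL.hasFDerivAt.sub (hf.comp _ fstL.hasFDerivAt)
  have hzero : tangentConeAt ℝ (h '' ((fun y => emb y (f y)) '' s)) (h (emb x (f x))) ⊆ {0} := by
    refine tangentConeAt_subset_of_eventually_sub_mem isClosed_singleton (by simp) ?_
    refine eventually_nhdsWithin_of_forall ?_
    rintro _ ⟨_, ⟨y, -, rfl⟩, rfl⟩
    simp [h]
  intro w hw
  have := hzero (hh.hasFDerivWithinAt.mapsTo_tangent_cone hw)
  rw [SetLike.mem_coe, mem_graphSub]
  simpa [sub_eq_zero] using this

lemma tangentConeAt_graph_eq (hs : s ∈ 𝓝 x) (hf : HasFDerivAt f A x) :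
    tangentConeAt ℝ ((fun y => emb y (f y)) '' s) (emb x (f x)) = graphSub A :=
  (tangentConeAt_graph_subset_graphSub hf).antisymm (graphSub_subset_tangentConeAt_graph hs hf)

lemma norm_sndL_le_of_mem_tangentConeAt_graph {K : NNReal} (hV : V ∈ 𝓝 x)
    (hlip : LipschitzOnWith K f V) {w : EuclideanSpace ℝ (α ⊕ β)}
    (hw : w ∈ tangentConeAt ℝ ((fun y => emb y (f y)) '' s) (emb x (f x))) :
    ‖sndL w‖ ≤ K * ‖fstL w‖ := by
  refine tangentConeAt_subset_of_eventually_sub_mem (R := ℝ) (C := {w | ‖sndL w‖ ≤ K * ‖fstL w‖})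
    (isClosed_le (by fun_prop) (by fun_prop)) (fun c v hv => ?_) ?_ hw
  · simp only [mem_ofPred_eq, map_smul, norm_smul] at hv ⊢
    nlinarith [norm_nonneg c]
  · have hfst : ∀ᶠ w in 𝓝 (emb x (f x)), fstL w ∈ V := fstL.continuous.continuousAt hV
    filter_upwards [nhdsWithin_le_nhds hfst, self_mem_nhdsWithin]
    rintro _ hyV ⟨y, -, rfl⟩
    simp only [fstL_emb] at hyV
    simpa [emb_sub, ← dist_eq_norm] using hlip.dist_le_mul y hyV x (mem_of_mem_nhds hV)

end GraphTangentCone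

section LipschitzGraph

variable {α β : Type*} [Fintype α] [Fintype β] {f : EuclideanSpace ℝ α → EuclideanSpace ℝ β}
  {s V : Set (EuclideanSpace ℝ α)} {x : EuclideanSpace ℝ α} {K : NNReal}

lemma exists_eq_graphSub_of_no_vertical (L : Submodule ℝ (EuclideanSpace ℝ (α ⊕ β)))
    (hrank : finrank ℝ L = Fintype.card α) (hvert : ∀ w ∈ L, fstL w = 0 → w = 0) :
    ∃ B : EuclideanSpace ℝ α →L[ℝ] EuclideanSpace ℝ β, L = graphSub B := by
  set F : L →ₗ[ℝ] EuclideanSpace ℝ α := (fstL (β := β)).toLinearMap ∘ₗ L.subtype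
  have hinj : Function.Injective F :=
    (injective_iff_map_eq_zero F).mpr fun w hw => Subtype.ext (hvert w w.2 hw)
  have hsurj : Function.Surjective F :=
    (LinearMap.injective_iff_surjective_of_finrank_eq_finrank
      (by rw [hrank, finrank_euclideanSpace])).mp hinj
  set e := LinearEquiv.ofBijective F ⟨hinj, hsurj⟩
  refine ⟨LinearMap.toContinuousLinearMap
      ((sndL (α := α)).toLinearMap ∘ₗ L.subtype ∘ₗ e.symm.toLinearMap),
    Submodule.eq_of_le_of_finrank_eq (fun w hw => ?_) (by rw [hrank, finrank_graphSub])⟩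
  have he : e.symm (fstL w) = ⟨w, hw⟩ := e.symm_apply_eq.mpr rfl
  rw [mem_graphSub]
  simp [he]

lemma norm_graph_secant_le (hlip : LipschitzOnWith K f V) (hx : x ∈ V) {y : EuclideanSpace ℝ α}
    (hy : y ∈ V) : ‖‖y - x‖⁻¹ • emb (y - x) (f y - f x)‖ ≤ 1 + K := by
  have hemb : ‖emb (y - x) (f y - f x)‖ ≤ (1 + K) * ‖y - x‖ := by
    have := hlip.dist_le_mul y hy x hx
    rw [dist_eq_norm, dist_eq_norm] at this
    linarith [norm_emb_le (y - x) (f y - f x)]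
  rw [norm_smul, norm_inv, norm_norm]
  rcases eq_or_ne y x with rfl | hne
  · simp only [sub_self, norm_zero, inv_zero, zero_mul]
    positivity
  · rwa [inv_mul_le_iff₀ (norm_pos_iff.mpr (sub_ne_zero.mpr hne)), mul_comm]

lemma mem_tangentConeAt_graph_of_mapClusterPt {l : Filter (EuclideanSpace ℝ α)} (hl : l ≤ 𝓝 x)
    (hfx : ContinuousAt f x) (hs : ∀ᶠ y in l, y ∈ s) {z : EuclideanSpace ℝ (α ⊕ β)}
    (hz : MapClusterPt z l fun y => ‖y - x‖⁻¹ • emb (y - x) (f y - f x)) :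
    z ∈ tangentConeAt ℝ ((fun y => emb y (f y)) '' s) (emb x (f x)) := by
  refine mem_tangentConeAt_of_mapClusterPt ?_ ?_ hz
  · simpa using ((tendsto_id.sub_const x).emb (hfx.tendsto.sub_const (f x))).mono_left hl
  · filter_upwards [hs] with y hy
    exact ⟨y, hy, by simp [emb_add]⟩

lemma hasFDerivAt_of_tangentConeAt_graph_subset (hV : V ∈ 𝓝 x) (hVs : V ⊆ s)
    (hlip : LipschitzOnWith K f V) {B : EuclideanSpace ℝ α →L[ℝ] EuclideanSpace ℝ β}
    (ht : tangentConeAt ℝ ((fun y => emb y (f y)) '' s) (emb x (f x)) ⊆ graphSub B) :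
    HasFDerivAt f B x := by
  -- The normalised secants `q y` stay bounded; their cluster points at `x` are tangent vectors,
  -- on which `φ` vanishes.
  set q := fun y => ‖y - x‖⁻¹ • emb (y - x) (f y - f x)
  set φ : EuclideanSpace ℝ (α ⊕ β) → ℝ := fun w => ‖sndL w - B (fstL w)‖
  have hφq : ∀ y, ‖y - x‖⁻¹ * ‖f y - f x - B (y - x)‖ = φ (q y) := fun y => by
    simp only [φ, q, smul_emb, fstL_emb, sndL_emb, map_smul, ← smul_sub, norm_smul, norm_inv,
      norm_norm]
  rw [hasFDerivAt_iff_tendsto]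
  simp_rw [hφq]
  by_contra hnot
  obtain ⟨ε, hε, hfreq⟩ : ∃ ε > 0, ∃ᶠ y in 𝓝 x, ε ≤ φ (q y) := by
    rw [Metric.tendsto_nhds] at hnot
    push Not at hnot
    simpa [Real.dist_eq, abs_of_nonneg (norm_nonneg _), φ] using hnot
  set l := 𝓝 x ⊓ 𝓟 {y | ε ≤ φ (q y)}
  have : l.NeBot := frequently_iff_neBot.mp hfreq
  have hVl : ∀ᶠ y in l, y ∈ V := mem_inf_of_left hV
  have hbound : ∀ᶠ y in l, q y ∈ Metric.closedBall 0 (1 + K) := hVl.mono fun y hy =>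
    mem_closedBall_zero_iff.mpr (norm_graph_secant_le hlip (mem_of_mem_nhds hV) hy)
  obtain ⟨z, -, hz⟩ :=
    (isCompact_closedBall _ _).exists_mapClusterPt (tendsto_principal.mpr hbound)
  have hzT := mem_tangentConeAt_graph_of_mapClusterPt inf_le_left
    (hlip.continuousOn.continuousAt hV) (hVl.mono fun y hy => hVs hy) hz
  have hzε : ε ≤ φ z := by
    have := hz.mem_closure_of_mem {w | ε ≤ φ w} (mem_inf_of_right (mem_principal_self _))
    rwa [(isClosed_le continuous_const (by fun_prop)).closure_eq] at this
  have hz0 : φ z = 0 := by simpa [φ, sub_eq_zero] using mem_graphSub.mp (ht hzT)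
  linarith

lemma differentiableAt_and_eq_graphSub_of_tangentConeAt_graph_eq (hV : V ∈ 𝓝 x) (hVs : V ⊆ s)
    (hlip : LipschitzOnWith K f V) {L : Submodule ℝ (EuclideanSpace ℝ (α ⊕ β))}
    (hrank : finrank ℝ L = Fintype.card α)
    (hL : (L : Set _) = tangentConeAt ℝ ((fun y => emb y (f y)) '' s) (emb x (f x))) :
    DifferentiableAt ℝ f x ∧ L = graphSub (fderiv ℝ f x) := by
  obtain ⟨B, rfl⟩ := exists_eq_graphSub_of_no_vertical L hrank fun w hw h0 => by
    have := norm_sndL_le_of_mem_tangentConeAt_graph hV hlip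
      (hL ▸ SetLike.mem_coe.mpr hw)
    rw [h0, norm_zero, mul_zero, norm_le_zero_iff] at this
    rw [← emb_fstL_sndL w, h0, this, emb_zero]
  have hB := hasFDerivAt_of_tangentConeAt_graph_subset hV hVs hlip hL.symm.subset
  exact ⟨hB.differentiableAt, by rw [hB.fderiv]⟩

end LipschitzGraph

lemma LipschitzOnWith.frequently_differentiableAt {E F : Type*} [NormedAddCommGroup E]
    [NormedSpace ℝ E] [FiniteDimensional ℝ E] [NormedAddCommGroup F] [NormedSpace ℝ F]
    [FiniteDimensional ℝ F] {f : E → F} {V : Set E} {K : NNReal} {x : E}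
    (hlip : LipschitzOnWith K f V) (hV : V ∈ 𝓝 x) : ∃ᶠ y in 𝓝 x, DifferentiableAt ℝ f y := by
  let _ : MeasurableSpace E := borel E
  have _ : BorelSpace E := ⟨rfl⟩
  have hdense := MeasureTheory.Measure.dense_of_ae
    ((hlip.mono interior_subset).ae_differentiableWithinAt_of_mem
      (μ := (Module.finBasis ℝ E).addHaar))
  have hint : interior V ∈ 𝓝 x := isOpen_interior.mem_nhds (mem_interior_iff_mem_nhds.mpr hV)
  refine ((mem_closure_iff_frequently.mp (hdense.closure_eq ▸ mem_univ x)).and_eventually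
    hint).mono fun y ⟨hy, hyW⟩ => ?_
  exact (hy hyW).differentiableAt (isOpen_interior.mem_nhds hyW)

section SCDerivative

variable {n m : ℕ} {Ω : Set (EuclideanSpace ℝ (Fin n))}
  {f : EuclideanSpace ℝ (Fin n) → EuclideanSpace ℝ (Fin m)} {x : EuclideanSpace ℝ (Fin n)}
  {A : EuclideanSpace ℝ (Fin n) →L[ℝ] EuclideanSpace ℝ (Fin m)}
  {V : Set (EuclideanSpace ℝ (Fin n))} {K : NNReal}

lemma gphFun_eq_image : gphFun Ω f = (fun y => emb y (f y)) '' Ω := by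
  ext w
  simp [gphFun, eq_comm]

lemma SCderivStarFun_eq_image : SCderivStarFun Ω f x = adjSub '' SCderivFun Ω f x := by
  ext M
  simp [SCderivStarFun, eq_comm]

lemma graphSub_mem_SCderivFun (hΩ : IsOpen Ω) (hf : ContinuousOn f Ω) (hx : x ∈ Ω)
    (hA : A ∈ BJac Ω f x) : graphSub A ∈ SCderivFun Ω f x := by
  obtain ⟨xk, hk, hxk, hAk⟩ := hA
  refine ⟨by rw [finrank_graphSub, Fintype.card_fin], fun k => emb (xk k) (f (xk k)),
    fun k => graphSub (fderiv ℝ f (xk k)),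
    fun k => ⟨⟨xk k, (hk k).1, rfl⟩, by rw [finrank_graphSub, Fintype.card_fin], ?_⟩,
    hxk.emb ((hf.continuousAt (hΩ.mem_nhds hx)).tendsto.comp hxk), tendsto_dZ_graphSub hAk⟩
  rw [gphFun_eq_image, tangentConeAt_graph_eq (hΩ.mem_nhds (hk k).1) (hk k).2.hasFDerivAt]

lemma mem_BJac_of_eventually {xk : ℕ → EuclideanSpace ℝ (Fin n)} (hxk : Tendsto xk atTop (𝓝 x))
    (hev : ∀ᶠ k in atTop, xk k ∈ Ω ∧ DifferentiableAt ℝ f (xk k))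
    (hA : Tendsto (fun k => fderiv ℝ f (xk k)) atTop (𝓝 A)) : A ∈ BJac Ω f x := by
  obtain ⟨N, hN⟩ := eventually_atTop.mp hev
  exact ⟨fun k => xk (k + N), fun k => hN _ (Nat.le_add_left N k),
    (tendsto_add_atTop_iff_nat N).mpr hxk, (tendsto_add_atTop_iff_nat N).mpr hA⟩

lemma exists_mem_BJac_subseq (hV : V ∈ 𝓝 x) (hlip : LipschitzOnWith K f V)
    {xk : ℕ → EuclideanSpace ℝ (Fin n)} (hxk : Tendsto xk atTop (𝓝 x))
    (hev : ∀ᶠ k in atTop, xk k ∈ Ω ∧ DifferentiableAt ℝ f (xk k)) :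
    ∃ A ∈ BJac Ω f x, ∃ φ : ℕ → ℕ, StrictMono φ ∧
      Tendsto (fun k => fderiv ℝ f (xk (φ k))) atTop (𝓝 A) := by
  have hbound : ∀ᶠ k in atTop, fderiv ℝ f (xk k) ∈ Metric.closedBall 0 K :=
    (hxk.eventually (eventually_eventually_nhds.mpr hV)).mono fun k hk =>
      mem_closedBall_zero_iff.mpr (norm_fderiv_le_of_lipschitzOn ℝ hk hlip)
  obtain ⟨A, -, φ, hφ, hA⟩ :=
    tendsto_subseq_of_frequently_bounded Metric.isBounded_closedBall hbound.frequently
  exact ⟨A, mem_BJac_of_eventually (hxk.comp hφ.tendsto_atTop) (hφ.tendsto_atTop.eventually hev) hA,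
    φ, hφ, hA⟩

lemma BJac_nonempty (hV : V ∈ 𝓝 x) (hVΩ : V ⊆ Ω) (hlip : LipschitzOnWith K f V) :
    (BJac Ω f x).Nonempty := by
  obtain ⟨xk, hxk, hdiff⟩ := frequently_iff_seq_forall.mp (hlip.frequently_differentiableAt hV)
  obtain ⟨A, hA, -⟩ := exists_mem_BJac_subseq hV hlip hxk
    ((hxk.eventually hV).mono fun k hk => ⟨hVΩ hk, hdiff k⟩)
  exact ⟨A, hA⟩

lemma SCderivFun_subset_graphSub_BJac (hV : V ∈ 𝓝 x) (hVΩ : V ⊆ Ω)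
    (hlip : LipschitzOnWith K f V) :
    SCderivFun Ω f x ⊆ {L | ∃ A ∈ BJac Ω f x, L = graphSub A} := by
  rintro L ⟨-, wk, Lk, hk, hwk, hdZ⟩
  choose xk hxkΩ hwxk using fun k => (hk k).1
  have hxk : Tendsto xk atTop (𝓝 x) := by
    have := (fstL.continuous.tendsto _).comp hwk
    simpa [Function.comp_def, hwxk] using this
  have hgood : ∀ᶠ k in atTop,
      DifferentiableAt ℝ f (xk k) ∧ Lk k = graphSub (fderiv ℝ f (xk k)) := by
    filter_upwards [hxk.eventually (eventually_eventually_nhds.mpr hV)] with k hVk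
    refine differentiableAt_and_eq_graphSub_of_tangentConeAt_graph_eq hVk hVΩ hlip
      ((hk k).2.1.trans (Fintype.card_fin n).symm) ?_
    rw [(hk k).2.2, hwxk k, gphFun_eq_image]
  obtain ⟨A, hA, φ, hφ, hlim⟩ :=
    exists_mem_BJac_subseq hV hlip hxk (hgood.mono fun k hk' => ⟨hxkΩ k, hk'.1⟩)
  refine ⟨A, hA,
    eq_of_tendsto_dZ (hdZ.comp hφ.tendsto_atTop) ((tendsto_dZ_graphSub hlim).congr' ?_)⟩
  filter_upwards [hφ.tendsto_atTop.eventually hgood] with k hk'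
  rw [hk'.2]

end SCDerivative

/-- Lemma 3.5 (Gfrerer–Outrata 2023): for continuous `f`, `𝒮f(x) ⊇ {rge(I,A) | A ∈ ∇̄f(x)}` and
`𝒮*f(x) ⊇ {rge(I,Aᵀ) | A ∈ ∇̄f(x)}`; for `f` Lipschitz near `x` these are equalities and `f`
has the SCD property at all points of `Ω` sufficiently close to `x`. -/
theorem scderiv_single_valued {n m : ℕ}
    (Ω : Set (EuclideanSpace ℝ (Fin n))) (hΩ : IsOpen Ω)
    (f : EuclideanSpace ℝ (Fin n) → EuclideanSpace ℝ (Fin m)) (hf : ContinuousOn f Ω)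
    (x : EuclideanSpace ℝ (Fin n)) (hx : x ∈ Ω) :
    ({L | ∃ A ∈ BJac Ω f x, L = graphSub A} ⊆ SCderivFun Ω f x) ∧
    ({M | ∃ A ∈ BJac Ω f x, M = graphSub (ContinuousLinearMap.adjoint A)} ⊆
        SCderivStarFun Ω f x) ∧
    ((∃ K : NNReal, ∃ U ∈ 𝓝 x, U ⊆ Ω ∧ LipschitzOnWith K f U) →
      (SCderivFun Ω f x = {L | ∃ A ∈ BJac Ω f x, L = graphSub A} ∧
       SCderivStarFun Ω f x = {M | ∃ A ∈ BJac Ω f x, M = graphSub (ContinuousLinearMap.adjoint A)} ∧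
       ∃ δ > (0 : ℝ), ∀ x' ∈ Ω, ‖x' - x‖ < δ → (SCderivFun Ω f x').Nonempty)) := by
  have hgraphs : ∀ x' ∈ Ω, {L | ∃ A ∈ BJac Ω f x', L = graphSub A} ⊆ SCderivFun Ω f x' := by
    rintro x' hx' _ ⟨A, hA, rfl⟩
    exact graphSub_mem_SCderivFun hΩ hf hx' hA
  simp only [SCderivStarFun_eq_image, setOf_graphSub_adjoint_eq_image]
  refine ⟨hgraphs x hx, image_mono (hgraphs x hx), ?_⟩
  rintro ⟨K, U, hU, hUΩ, hlip⟩
  have hSC : SCderivFun Ω f x = {L | ∃ A ∈ BJac Ω f x, L = graphSub A} :=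
    (SCderivFun_subset_graphSub_BJac hU hUΩ hlip).antisymm (hgraphs x hx)
  obtain ⟨δ, hδ, hball⟩ := Metric.mem_nhds_iff.mp (interior_mem_nhds.mpr hU)
  refine ⟨hSC, by rw [hSC], δ, hδ, fun x' hx' hdist => ?_⟩
  have hx'U : U ∈ 𝓝 x' := mem_interior_iff_mem_nhds.mp (hball (mem_ball_iff_norm.mpr hdist))
  obtain ⟨A, hA⟩ := BJac_nonempty hx'U hUΩ hlip
  exact ⟨_, hgraphs x' hx' ⟨A, hA, rfl⟩⟩
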